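/- arXiv:1710.05342 — 2 statements merged into one kernel-verified Lean document; each statement's English description precedes it below -/
import Mathlib

section
/- Let J = [0,α) ∪ [α+r, L+r) with 0 < α < L and r > 0. The exponential system E(ℤ) = {e^{2πi nx}}_{n∈ℤ} is a frame for L²(J) if and only if L + {r} ≤ 1, where {r} is the fractional part of r. -/
/-!
Write `r = m + ρ` with `m = ⌊r⌋` and `ρ = {r}`. Every `e^{2πinx}` is `1`-periodic, so moving the
piece `[α + r, L + r)` of `J` back by `m` to `[α + ρ, L + ρ)` changes neither the coefficients
`∫_J f ē_n` nor `‖f‖²`. If `L + ρ ≤ 1`, the moved copy of `J` lies in `[0, 1]` without overlap, and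
Parseval's identity on `[0, 1]` gives a tight frame with `A = B = 1`. If `L + ρ > 1`, then
`[0, α)` and `[α + r, L + r) - (m + 1)` overlap in an interval `I` of positive length; the
nonzero function `1_I - 1_{I + m + 1}` is orthogonal to every `e_n` on `J`, so there is no lower
frame bound.
-/

open MeasureTheory Real Set
open scoped ENNReal

noncomputable section

/-- The exponential `e^{2πi n x}` on `ℝ`. -/
def fExp1 (n : ℤ) (x : ℝ) : ℂ :=
  Complex.exp (2 * Real.pi * Complex.I * (n : ℝ) * x)

open ComplexConjugate

lemma fExp1_eq_fourier (n : ℤ) (x : ℝ) : fExp1 n x = fourier n (x : UnitAddCircle) := by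
  rw [fourier_coe_apply, fExp1]
  congr 1
  push_cast
  ring

lemma fExp1_add_int (n k : ℤ) (x : ℝ) : fExp1 n (x + k) = fExp1 n x := by
  rw [fExp1_eq_fourier, fExp1_eq_fourier, AddCircle.coe_add,
    (AddCircle.coe_eq_zero_iff 1 (x := (k : ℝ))).mpr ⟨k, by simp⟩, add_zero]

lemma norm_fExp1 (n : ℤ) (x : ℝ) : ‖fExp1 n x‖ = 1 := by
  rw [fExp1_eq_fourier, fourier_apply]
  exact Circle.norm_coe _

lemma continuous_fExp1 (n : ℤ) : Continuous (fExp1 n) := by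
  unfold fExp1; fun_prop

lemma setIntegral_preimage_add_right {E : Type*} [NormedAddCommGroup E] [NormedSpace ℝ E]
    (g : ℝ → E) (c : ℝ) (T : Set ℝ) :
    ∫ x in (· + c) ⁻¹' T, g (x + c) = ∫ x in T, g x :=
  (measurePreserving_add_right volume c).setIntegral_preimage_emb
    (measurableEmbedding_addRight c) g T

lemma tsum_norm_sq_setIntegral_mul_conj_fExp1 {U : Set ℝ} (hU : MeasurableSet U)
    (hU1 : U ⊆ Icc 0 1) {F : ℝ → ℂ} (hF : MemLp F 2 (volume.restrict U)) :
    ∑' n : ℤ, ‖∫ x in U, F x * conj (fExp1 n x)‖ ^ 2 = ∫ x in U, ‖F x‖ ^ 2 := by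
  have hG : MemLp (U.indicator F) 2 (volume.restrict (Ioc 0 1)) :=
    ((memLp_indicator_iff_restrict hU).mpr hF).mono_measure Measure.restrict_le_self
  have hU' : Icc (0 : ℝ) 1 ∩ U = U := inter_eq_right.mpr hU1
  have parseval := tsum_sq_fourierCoeffOn zero_lt_one hG
  simp only [sub_zero, inv_one, one_smul] at parseval
  convert parseval using 3 with n
  · rw [fourierCoeffOn_eq_integral, intervalIntegral.integral_of_le zero_le_one,
      ← integral_Icc_eq_integral_Ioc, setIntegral_congr_fun measurableSet_Icc
        (g := U.indicator fun t => F t * conj (fExp1 n t)) fun t _ => ?_,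
      setIntegral_indicator hU, hU', sub_zero, div_one, one_smul]
    by_cases ht : t ∈ U
    · simp [ht, fExp1, ← Complex.exp_conj, mul_comm]
    · simp [ht]
  · rw [intervalIntegral.integral_of_le zero_le_one, ← integral_Icc_eq_integral_Ioc,
      setIntegral_congr_fun measurableSet_Icc (g := U.indicator fun t => ‖F t‖ ^ 2)
        fun t _ => ?_, setIntegral_indicator hU, hU']
    by_cases ht : t ∈ U <;> simp [ht]

section Shift

variable {S T : Set ℝ} {c : ℝ} [DecidablePred (· ∈ S)]

lemma memLp_piecewise_shift {p : ℝ≥0∞} {f : ℝ → ℂ} (hS : MeasurableSet S)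
    (hf : MemLp f p (volume.restrict (S ∪ T))) :
    MemLp (S.piecewise f fun y => f (y + c)) p (volume.restrict (S ∪ (· + c) ⁻¹' T)) := by
  refine MemLp.piecewise hS ?_ ?_
  · rw [Measure.restrict_restrict hS, inter_union_distrib_left, inter_self,
      union_eq_left.mpr inter_subset_left]
    exact hf.mono_measure (Measure.restrict_mono subset_union_left le_rfl)
  · have hT : MemLp f p (volume.restrict T) :=
      hf.mono_measure (Measure.restrict_mono subset_union_right le_rfl)
    refine (hT.comp_measurePreserving ((measurePreserving_add_right volume c).restrict_preimage_emb
      (measurableEmbedding_addRight c) T)).mono_measure ?_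
    rw [Measure.restrict_restrict hS.compl]
    exact Measure.restrict_mono (fun x hx => hx.2.resolve_left hx.1) le_rfl

lemma setIntegral_union_piecewise_shift {E : Type*} [NormedAddCommGroup E] [NormedSpace ℝ E]
    (hS : MeasurableSet S) (hT : MeasurableSet T) (hST : Disjoint S T)
    (hST' : Disjoint S ((· + c) ⁻¹' T)) (Ψ : ℝ → ℂ → E) (hΨ : ∀ x, Ψ (x + c) = Ψ x) {f : ℝ → ℂ}
    (hf : IntegrableOn (fun x => Ψ x (f x)) (S ∪ T)) :
    ∫ x in S ∪ (· + c) ⁻¹' T, Ψ x (S.piecewise f (fun y => f (y + c)) x) =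
      ∫ x in S ∪ T, Ψ x (f x) := by
  have hT' : MeasurableSet ((· + c) ⁻¹' T) := hT.preimage (measurable_add_const c)
  have onS : EqOn (fun x => Ψ x (S.piecewise f (fun y => f (y + c)) x)) (fun x => Ψ x (f x)) S :=
    fun x hx => by simp only [piecewise_eq_of_mem _ _ _ hx]
  have onT' : EqOn (fun x => Ψ x (S.piecewise f (fun y => f (y + c)) x))
      (fun x => Ψ (x + c) (f (x + c))) ((· + c) ⁻¹' T) :=
    fun x hx => by simp only [piecewise_eq_of_notMem _ _ _ (hST'.notMem_of_mem_right hx), hΨ]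
  have intS := hf.mono_set subset_union_left
  have intT := hf.mono_set subset_union_right
  have intT' : IntegrableOn (fun x => Ψ (x + c) (f (x + c))) ((· + c) ⁻¹' T) :=
    ((measurePreserving_add_right volume c).integrableOn_comp_preimage
      (measurableEmbedding_addRight c)).mpr intT
  rw [setIntegral_union hST' hT' (intS.congr_fun onS.symm hS) (intT'.congr_fun onT'.symm hT'),
    setIntegral_union hST hT intS intT, setIntegral_congr_fun hS onS,
    setIntegral_congr_fun hT' onT', setIntegral_preimage_add_right (fun x => Ψ x (f x))]

end Shift

lemma IntegrableOn.mul_conj_fExp1 {J : Set ℝ} {f : ℝ → ℂ} (hf : IntegrableOn f J) (n : ℤ) :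
    IntegrableOn (fun x => f x * conj (fExp1 n x)) J :=
  Integrable.mul_bdd hf (Complex.continuous_conj.comp (continuous_fExp1 n)).aestronglyMeasurable
    (c := 1) (ae_of_all _ fun x => by rw [Complex.norm_conj, norm_fExp1])

theorem tsum_norm_sq_setIntegral_Ico_union_Ico {α L r : ℝ} (hα : 0 ≤ α) (hαL : α ≤ L)
    (hr : 0 ≤ r) (h : L + Int.fract r ≤ 1) {f : ℝ → ℂ}
    (hf : MemLp f 2 (volume.restrict (Ico 0 α ∪ Ico (α + r) (L + r)))) :
    ∑' n : ℤ, ‖∫ x in Ico 0 α ∪ Ico (α + r) (L + r), f x * conj (fExp1 n x)‖ ^ 2 =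
      ∫ x in Ico 0 α ∪ Ico (α + r) (L + r), ‖f x‖ ^ 2 := by
  classical
  have hpre :
      (· + (⌊r⌋ : ℝ)) ⁻¹' Ico (α + r) (L + r) = Ico (α + Int.fract r) (L + Int.fract r) := by
    simp only [preimage_add_const_Ico, add_sub_assoc, Int.self_sub_floor]
  have hfract := Int.fract_nonneg r
  have hST : Disjoint (Ico 0 α) (Ico (α + r) (L + r)) :=
    Ico_disjoint_Ico_same.mono_right (Ico_subset_Ico_left (by linarith))
  have hST' : Disjoint (Ico 0 α) ((· + (⌊r⌋ : ℝ)) ⁻¹' Ico (α + r) (L + r)) :=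
    hpre ▸ Ico_disjoint_Ico_same.mono_right (Ico_subset_Ico_left (by linarith))
  have hU : Ico 0 α ∪ (· + (⌊r⌋ : ℝ)) ⁻¹' Ico (α + r) (L + r) ⊆ Icc 0 1 := by
    rw [hpre]
    exact union_subset (Ico_subset_Icc_self.trans (Icc_subset_Icc le_rfl (by linarith)))
      (Ico_subset_Icc_self.trans (Icc_subset_Icc (by linarith) h))
  have : IsFiniteMeasure (volume.restrict (Ico 0 α ∪ Ico (α + r) (L + r))) :=
    isFiniteMeasure_restrict.mpr (measure_union_lt_top measure_Ico_lt_top measure_Ico_lt_top).ne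
  calc _ = ∑' n : ℤ, ‖∫ x in Ico 0 α ∪ (· + (⌊r⌋ : ℝ)) ⁻¹' Ico (α + r) (L + r),
        (Ico 0 α).piecewise f (fun y => f (y + ⌊r⌋)) x * conj (fExp1 n x)‖ ^ 2 :=
        tsum_congr fun n => by
          rw [setIntegral_union_piecewise_shift measurableSet_Ico measurableSet_Ico hST hST'
            (fun x z => z * conj (fExp1 n x)) (fun x => by simp only [fExp1_add_int])
            (IntegrableOn.mul_conj_fExp1 (hf.integrable one_le_two) n)]
    _ = ∫ x in Ico 0 α ∪ (· + (⌊r⌋ : ℝ)) ⁻¹' Ico (α + r) (L + r),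
        ‖(Ico 0 α).piecewise f (fun y => f (y + ⌊r⌋)) x‖ ^ 2 :=
        tsum_norm_sq_setIntegral_mul_conj_fExp1
          (measurableSet_Ico.union (measurableSet_Ico.preimage (measurable_add_const _))) hU
          (memLp_piecewise_shift measurableSet_Ico hf)
    _ = _ := setIntegral_union_piecewise_shift measurableSet_Ico measurableSet_Ico hST hST'
        (fun _ z => ‖z‖ ^ 2) (fun _ => rfl) (hf.integrable_norm_pow two_ne_zero)

theorem exists_memLp_forall_setIntegral_mul_conj_fExp1_eq_zero {J : Set ℝ} {a b : ℝ} (k : ℤ)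
    (hab : a ≤ b) (hbk : b ≤ a + k) (hJ : Ico a b ⊆ J) (hJk : Ico (a + k) (b + k) ⊆ J) :
    ∃ g : ℝ → ℂ, MemLp g 2 (volume.restrict J) ∧ ∫ x in J, ‖g x‖ ^ 2 = 2 * (b - a) ∧
      ∀ n : ℤ, ∫ x in J, g x * conj (fExp1 n x) = 0 := by
  set I := Ico a b
  set I' := Ico (a + (k : ℝ)) (b + k)
  have hpre : (· + (k : ℝ)) ⁻¹' I' = I := by
    simp only [I, I', preimage_add_const_Ico, add_sub_cancel_right]
  have hdisj : Disjoint I I' := Ico_disjoint_Ico_same.mono_right (Ico_subset_Ico_left hbk)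
  refine ⟨fun x => I.indicator (fun _ => 1) x - I'.indicator (fun _ => 1) x, ?_, ?_, fun n => ?_⟩
  · exact ((memLp_indicator_const 2 measurableSet_Ico (1 : ℂ) (Or.inr measure_Ico_lt_top.ne)).sub
      (memLp_indicator_const 2 measurableSet_Ico (1 : ℂ) (Or.inr measure_Ico_lt_top.ne))).restrict J
  · have hsq : ∀ x, ‖I.indicator (fun _ => (1 : ℂ)) x - I'.indicator (fun _ => 1) x‖ ^ 2 =
        (I ∪ I').indicator 1 x := by
      intro x
      by_cases hx : x ∈ I
      · simp [hx, hdisj.notMem_of_mem_left hx]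
      · by_cases hx' : x ∈ I' <;> simp [hx, hx']
    simp only [hsq]
    rw [integral_indicator_one (measurableSet_Ico.union measurableSet_Ico),
      measureReal_restrict_apply (measurableSet_Ico.union measurableSet_Ico),
      inter_eq_left.mpr (union_subset hJ hJk),
      measureReal_union hdisj measurableSet_Ico measure_Ico_lt_top.ne measure_Ico_lt_top.ne,
      Real.volume_real_Ico_of_le hab, Real.volume_real_Ico_of_le (by linarith)]
    ring
  · have hmul : ∀ x, (I.indicator (fun _ => (1 : ℂ)) x - I'.indicator (fun _ => 1) x) *
        conj (fExp1 n x) = I.indicator (fun x => conj (fExp1 n x)) x -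
          I'.indicator (fun x => conj (fExp1 n x)) x := by
      intro x
      by_cases hx : x ∈ I <;> by_cases hx' : x ∈ I' <;> simp [hx, hx']
    have hint : ∀ u v : ℝ, Integrable ((Ico u v).indicator fun x => conj (fExp1 n x))
        (volume.restrict J) := fun u v =>
      (((Complex.continuous_conj.comp (continuous_fExp1 n)).integrableOn_Icc.mono_set
        Ico_subset_Icc_self).integrable_indicator measurableSet_Ico).restrict
    have hshift : ∫ x in I, conj (fExp1 n x) = ∫ x in I', conj (fExp1 n x) :=
      calc ∫ x in I, conj (fExp1 n x)
          = ∫ x in (· + (k : ℝ)) ⁻¹' I', conj (fExp1 n (x + k)) := by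
            rw [hpre]; simp only [fExp1_add_int]
        _ = ∫ x in I', conj (fExp1 n x) :=
          setIntegral_preimage_add_right (fun x => conj (fExp1 n x)) _ _
    simp only [hmul]
    rw [integral_sub (hint _ _) (hint _ _), setIntegral_indicator measurableSet_Ico,
      setIntegral_indicator measurableSet_Ico, inter_eq_right.mpr hJ, inter_eq_right.mpr hJk,
      hshift, sub_self]

theorem exists_Ico_subset_of_one_lt_add_fract {α L r : ℝ} (hα : 0 < α) (hαL : α < L)
    (hr : 0 ≤ r) (h : 1 < L + Int.fract r) :
    ∃ a b : ℝ, ∃ k : ℤ, a < b ∧ b ≤ a + k ∧ Ico a b ⊆ Ico 0 α ∧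
      Ico (a + k) (b + k) ⊆ Ico (α + r) (L + r) := by
  have hfloor := Int.floor_add_fract r
  have hfract := Int.fract_lt_one r
  refine ⟨max 0 (α + Int.fract r - 1), min α (L + Int.fract r - 1), ⌊r⌋ + 1,
    max_lt (lt_min hα (by linarith)) (lt_min (by linarith) (by linarith)), ?_,
    Ico_subset_Ico (le_max_left _ _) (min_le_left _ _), Ico_subset_Ico ?_ ?_⟩ <;> push_cast
  · linarith [min_le_left α (L + Int.fract r - 1), le_max_right 0 (α + Int.fract r - 1)]
  · linarith [le_max_right 0 (α + Int.fract r - 1)]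
  · linarith [min_le_right α (L + Int.fract r - 1)]

theorem stmt9 (α L r : ℝ) (hα : 0 < α) (hαL : α < L) (hr : 0 < r) :
    (∃ A B : ℝ, 0 < A ∧ A ≤ B ∧
      ∀ f : ℝ → ℂ,
        MemLp f 2 (volume.restrict (Ico 0 α ∪ Ico (α + r) (L + r))) →
        A * ∫ x in Ico 0 α ∪ Ico (α + r) (L + r), ‖f x‖ ^ 2
            ≤ ∑' n : ℤ, ‖∫ x in Ico 0 α ∪ Ico (α + r) (L + r),
                f x * (starRingEnd ℂ) (fExp1 n x)‖ ^ 2 ∧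
        ∑' n : ℤ, ‖∫ x in Ico 0 α ∪ Ico (α + r) (L + r),
                f x * (starRingEnd ℂ) (fExp1 n x)‖ ^ 2
            ≤ B * ∫ x in Ico 0 α ∪ Ico (α + r) (L + r), ‖f x‖ ^ 2) ↔
      L + Int.fract r ≤ 1 := by
  constructor
  · rintro ⟨A, B, hA, -, hframe⟩
    by_contra! hlt
    obtain ⟨a, b, k, hab, hbk, hI, hIk⟩ :=
      exists_Ico_subset_of_one_lt_add_fract hα hαL hr.le hlt
    obtain ⟨g, hg, hnorm, hcoeff⟩ := exists_memLp_forall_setIntegral_mul_conj_fExp1_eq_zero k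
      hab.le hbk (hI.trans subset_union_left) (hIk.trans subset_union_right)
    have hlower := (hframe g hg).1
    simp only [hcoeff, hnorm, norm_zero, zero_pow two_ne_zero, tsum_zero] at hlower
    nlinarith
  · intro h
    refine ⟨1, 1, one_pos, le_rfl, fun f hf => ?_⟩
    rw [one_mul, tsum_norm_sq_setIntegral_Ico_union_Ico hα.le hαL.le hr.le h hf]
    exact ⟨le_rfl, le_rfl⟩
end
end

section
/- Let J = [0,α) ∪ [α+r, L+r) with 0 < α < 1, L - α < 1, and 0 < r < 1. Then the integer translates of J cover ℝ (up to measure zero) if and only if L + r ≥ 2. -/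
open MeasureTheory Real Set
open scoped ENNReal

noncomputable section

/-! If `L + r < 2`, no translate of `J` meets the open interval
`(max α (L + r - 1), min (α + r) 1)`. If `L + r ≥ 2`, a point `t ∈ [0, 1)` lies either in
`[0, α)` or, shifted by one, in `[α + 1, 2) ⊆ [α + r, L + r)`. -/

lemma mem_iUnion_image_add_intCast {S : Set ℝ} {x : ℝ} :
    x ∈ ⋃ n : ℤ, (fun y => y + (n : ℝ)) '' S ↔ ∃ n : ℤ, x - n ∈ S := by
  simp only [mem_iUnion, mem_image, ← eq_sub_iff_add_eq]
  exact exists_congr fun n => ⟨fun ⟨_, hy, h⟩ => h ▸ hy, fun h => ⟨_, h, rfl⟩⟩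

lemma iUnion_image_add_intCast_eq_univ {S : Set ℝ}
    (h : ∀ t ∈ Ico (0 : ℝ) 1, ∃ k : ℤ, t + k ∈ S) :
    ⋃ n : ℤ, (fun y => y + (n : ℝ)) '' S = univ := by
  refine eq_univ_of_forall fun x => mem_iUnion_image_add_intCast.2 ?_
  obtain ⟨k, hk⟩ := h (Int.fract x) ⟨Int.fract_nonneg x, Int.fract_lt_one x⟩
  refine ⟨⌊x⌋ - k, ?_⟩
  convert hk using 1
  rw [Int.fract]
  push_cast
  ring

lemma le_of_Ioo_subset_of_volume_eq_zero {s : Set ℝ} {a b : ℝ} (hs : volume s = 0)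
    (h : Ioo a b ⊆ s) : b ≤ a := by
  have hIoo := measure_mono_null h hs
  rw [Real.volume_Ioo, ENNReal.ofReal_eq_zero] at hIoo
  linarith

variable {a c d : ℝ}

lemma iUnion_image_add_intCast_Ico_union_Ico_eq_univ (hc : c ≤ a + 1) (hd : 2 ≤ d) :
    ⋃ n : ℤ, (fun y => y + (n : ℝ)) '' (Ico 0 a ∪ Ico c d) = univ := by
  refine iUnion_image_add_intCast_eq_univ fun t ⟨ht0, ht1⟩ => ?_
  rcases lt_or_ge t a with hta | hat
  · exact ⟨0, Or.inl ⟨by simpa using ht0, by simpa using hta⟩⟩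
  · exact ⟨1, Or.inr ⟨by push_cast; linarith, by push_cast; linarith⟩⟩

lemma notMem_iUnion_image_add_intCast_Ico_union_Ico {x : ℝ} (hax : a < x) (hxc : x < c)
    (hx1 : x < 1) (hdx : d - 1 < x) :
    x ∉ ⋃ n : ℤ, (fun y => y + (n : ℝ)) '' (Ico 0 a ∪ Ico c d) := by
  rw [mem_iUnion_image_add_intCast]
  rintro ⟨n, ⟨h0, ha⟩ | ⟨hc, hd⟩⟩
  · have hn : (1 : ℝ) ≤ n := by exact_mod_cast (show (0 : ℝ) < n by linarith)
    linarith
  · have hn : n ≤ -1 := Int.le_sub_one_of_lt (by exact_mod_cast (show (n : ℝ) < 0 by linarith))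
    have hn' : (n : ℝ) ≤ -1 := by exact_mod_cast hn
    linarith

theorem stmt11_general (α L r : ℝ)
    (hα1 : α < 1) (hLα : L - α < 1) (hr : 0 < r) (hr1 : r < 1) :
    volume ((⋃ n : ℤ,
        (fun x => x + (n : ℝ)) '' (Ico 0 α ∪ Ico (α + r) (L + r)))ᶜ) = 0 ↔
      2 ≤ L + r := by
  constructor
  · intro hnull
    by_contra! hlt
    have hgap : Ioo (max α (L + r - 1)) (min (α + r) 1) ⊆ _ := fun x ⟨hmx, hxm⟩ =>
      notMem_iUnion_image_add_intCast_Ico_union_Ico (max_lt_iff.1 hmx).1 (lt_min_iff.1 hxm).1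
        (lt_min_iff.1 hxm).2 (max_lt_iff.1 hmx).2
    exact (le_of_Ioo_subset_of_volume_eq_zero hnull hgap).not_gt
      (max_lt (lt_min (by linarith) hα1) (lt_min (by linarith) (by linarith)))
  · intro h2
    rw [iUnion_image_add_intCast_Ico_union_Ico_eq_univ (by linarith) h2, compl_univ,
      measure_empty]

theorem stmt11 (α L r : ℝ) (hα : 0 < α) (hαL : α < L)
    (hα1 : α < 1) (hLα : L - α < 1) (hr : 0 < r) (hr1 : r < 1) :
    volume ((⋃ n : ℤ,
        (fun x => x + (n : ℝ)) '' (Ico 0 α ∪ Ico (α + r) (L + r)))ᶜ) = 0 ↔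
      2 ≤ L + r :=
  stmt11_general α L r hα1 hLα hr hr1
end
end
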